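/- Let D be a growth diagram whose vertices lie on a rectangle [a,b] × [c,d] in the directed grid graph. Given a labeling of the vertices along a single monotone lattice path from the corner (a,b) to the corner (c,d) by partitions satisfying the growth condition (each edge adds a single box), there is a unique extension of this labeling to a growth diagram on the entire rectangle. -/

import Mathlib

/-- `β` is obtained from `α` by adding a single box. -/
def OneBox (α β : YoungDiagram) : Prop := α ≤ β ∧ β.cells.card = α.cells.card + 1

/-- Two cells are adjacent if they share an edge. -/
def AdjCell (c d : ℕ × ℕ) : Prop :=
  (c.1 = d.1 ∧ (c.2 + 1 = d.2 ∨ d.2 + 1 = c.2)) ∨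
  (c.2 = d.2 ∧ (c.1 + 1 = d.1 ∨ d.1 + 1 = c.1))

/-- The local recurrence condition of growth diagrams for a square with corners
`γ` (bottom left), `α` (top left), `δ` (bottom right), `β` (top right): if the two
boxes of `β/γ` are nonadjacent, then `α` and `δ` are the two distinct intermediate
partitions between `γ` and `β`. -/
def GrowthSq (γ α δ β : YoungDiagram) : Prop :=
  (∃ c ∈ β.cells, ∃ d ∈ β.cells, c ∉ γ.cells ∧ d ∉ γ.cells ∧ c ≠ d ∧ ¬ AdjCell c d) →
    α ≠ δ

/-!
The local rule determines a square from three of its corners (`existsUnique_growthSq`): if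
`γ ⊂ δ ⊂ β` adds the cells `x` then `y`, the intermediate diagrams are `δ` and, when `x ≰ y`,
`γ ∪ {y}`; comparable new cells are always adjacent, so the rule picks `δ` exactly when the cells
are adjacent and `γ ∪ {y}` otherwise.

For the rectangle, induct on the length of the path. If its last step goes up, the rectangle
without its top row carries the unique extension of the shorter path, and the top row is then
filled in uniquely from its right end leftwards, square by square. A last step to the right is
the transposed situation.
-/

lemma oneBox_iff {α β : YoungDiagram} :
    OneBox α β ↔ ∃ x ∉ α.cells, β.cells = insert x α.cells := by
  constructor
  · rintro ⟨hle, hcard⟩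
    obtain ⟨x, hx, h⟩ := Finset.exists_eq_insert_iff.mpr
      ⟨YoungDiagram.cells_subset_iff.mpr hle, hcard.symm⟩
    exact ⟨x, hx, h.symm⟩
  · rintro ⟨x, hx, h⟩
    refine ⟨YoungDiagram.cells_subset_iff.mp ?_, ?_⟩
    · rw [h]; exact Finset.subset_insert x α.cells
    · rw [h, Finset.card_insert_of_notMem hx]

lemma AdjCell.symm {x y : ℕ × ℕ} (h : AdjCell x y) : AdjCell y x := by
  unfold AdjCell at *; omega

lemma AdjCell.le_or_le {x y : ℕ × ℕ} (h : AdjCell x y) : x ≤ y ∨ y ≤ x := by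
  simp only [AdjCell, Prod.le_def] at *; omega

lemma exists_lt_lt_of_not_adjCell {x y : ℕ × ℕ} (hxy : x < y) (h : ¬ AdjCell x y) :
    ∃ z, x < z ∧ z < y := by
  simp only [AdjCell, Prod.lt_iff] at *
  by_cases h₂ : x.2 < y.2
  · exact ⟨(x.1, x.2 + 1), by simp only; omega⟩
  · exact ⟨(x.1 + 1, x.2), by simp only; omega⟩

lemma GrowthSq.swap {γ α δ β : YoungDiagram} (h : GrowthSq γ α δ β) : GrowthSq γ δ α β :=
  fun hcells => (h hcells).symm

section TwoCells

variable {γ β : YoungDiagram} {x y : ℕ × ℕ} (hβ : β.cells = insert y (insert x γ.cells))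
include hβ

lemma adjCell_of_lt (hx : x ∉ γ.cells) (hxy : x < y) : AdjCell x y := by
  by_contra h
  obtain ⟨z, hxz, hzy⟩ := exists_lt_lt_of_not_adjCell hxy h
  have hz : z ∈ β.cells := β.isLowerSet hzy.le (by simp [hβ])
  simp only [hβ, Finset.mem_insert] at hz
  rcases hz with rfl | rfl | hz
  · exact hzy.ne rfl
  · exact hxz.ne rfl
  · exact hx (γ.isLowerSet hxz.le hz)

lemma growthSq_of_adjCell {α δ : YoungDiagram} (h : AdjCell x y) : GrowthSq γ α δ β := by
  rintro ⟨c, hc, d, hd, hcγ, hdγ, hcd, hadj⟩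
  exfalso
  simp only [hβ, Finset.mem_insert] at hc hd
  rcases hc with rfl | rfl | hc <;> rcases hd with rfl | rfl | hd <;>
    first | exact hcd rfl | exact hadj h | exact hadj h.symm | contradiction

lemma isLowerSet_insert_of_not_le (hxy : ¬ x ≤ y) :
    IsLowerSet ((insert y γ.cells : Finset (ℕ × ℕ)) : Set (ℕ × ℕ)) := by
  rintro u v hvu hu
  simp only [Finset.coe_insert, Set.mem_insert_iff, Finset.mem_coe] at hu ⊢
  rcases hu with rfl | hu
  · have hv : v ∈ β.cells := β.isLowerSet hvu (by simp [hβ])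
    simp only [hβ, Finset.mem_insert] at hv
    rcases hv with rfl | rfl | hv
    · exact Or.inl rfl
    · exact absurd hvu hxy
    · exact Or.inr hv
  · exact Or.inr (γ.isLowerSet hvu hu)

lemma cells_eq_insert_or_insert {α : YoungDiagram} (hγα : OneBox γ α) (hαβ : OneBox α β) :
    α.cells = insert x γ.cells ∨ α.cells = insert y γ.cells := by
  obtain ⟨z, hzγ, hα⟩ := oneBox_iff.mp hγα
  have hz : z ∈ β.cells := YoungDiagram.cells_subset_iff.mpr hαβ.1 (by simp [hα])
  simp only [hβ, Finset.mem_insert] at hz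
  rcases hz with rfl | rfl | hz
  · exact Or.inr hα
  · exact Or.inl hα
  · exact absurd hz hzγ

end TwoCells

theorem existsUnique_growthSq {γ δ β : YoungDiagram} (hγδ : OneBox γ δ) (hδβ : OneBox δ β) :
    ∃! α, OneBox γ α ∧ OneBox α β ∧ GrowthSq γ α δ β := by
  obtain ⟨x, hxγ, hδ⟩ := oneBox_iff.mp hγδ
  obtain ⟨y, hyδ, hβδ⟩ := oneBox_iff.mp hδβ
  have hβ : β.cells = insert y (insert x γ.cells) := hδ ▸ hβδ
  have hyγ : y ∉ γ.cells := fun h => hyδ (by simp [hδ, h])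
  have hxy : x ≠ y := by rintro rfl; exact hyδ (by simp [hδ])
  have hyx : ¬ y ≤ x := fun h => hyδ (δ.isLowerSet h (by simp [hδ]))
  by_cases hle : x ≤ y
  · have hadj := adjCell_of_lt hβ hxγ (lt_of_le_of_ne hle hxy)
    refine ⟨δ, ⟨hγδ, hδβ, growthSq_of_adjCell hβ hadj⟩, fun α ⟨hγα, hαβ, _⟩ => ?_⟩
    rcases cells_eq_insert_or_insert hβ hγα hαβ with hα | hα
    · exact YoungDiagram.ext (hα.trans hδ.symm)
    · have hx : x ∈ α.cells := α.isLowerSet hle (by simp [hα])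
      simp [hα, hxy, hxγ] at hx
  · let α : YoungDiagram := ⟨insert y γ.cells, isLowerSet_insert_of_not_le hβ hle⟩
    have hnadj : ¬ AdjCell x y := fun h => h.le_or_le.elim hle hyx
    have hne : ∀ {α'}, GrowthSq γ α' δ β → α' ≠ δ := fun h =>
      h ⟨x, by simp [hβ], y, by simp [hβ], hxγ, hyγ, hxy, hnadj⟩
    refine ⟨α, ⟨oneBox_iff.mpr ⟨y, hyγ, rfl⟩, oneBox_iff.mpr ⟨x, ?_, ?_⟩, ?_⟩, ?_⟩
    · simp [α, hxy, hxγ]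
    · rw [hβ, Finset.insert_comm]
    · rintro - rfl
      exact hyδ (Finset.mem_insert_self y γ.cells)
    · rintro α' ⟨hγα', hα'β, hsq⟩
      rcases cells_eq_insert_or_insert hβ hγα' hα'β with hα' | hα'
      · exact absurd (YoungDiagram.ext (hα'.trans hδ.symm)) (hne hsq)
      · exact YoungDiagram.ext hα'

/-- `u` is the lower and `v` the upper row of a two-row growth diagram on the columns `a, …, c`,
except that the horizontal edges of `u` are not required to add a box. -/
def IsStrip (a c : ℤ) (u v : ℤ → YoungDiagram) : Prop :=
  (∀ i, a ≤ i → i ≤ c → OneBox (u i) (v i)) ∧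
  ∀ i, a ≤ i → i < c → OneBox (v i) (v (i + 1)) ∧ GrowthSq (u i) (v i) (u (i + 1)) (v (i + 1))

lemma exists_isStrip {a c : ℤ} (hac : a ≤ c) {u : ℤ → YoungDiagram}
    (hu : ∀ i, a ≤ i → i < c → OneBox (u i) (u (i + 1))) {t : YoungDiagram}
    (ht : OneBox (u c) t) : ∃ v, IsStrip a c u v ∧ v c = t := by
  induction a, hac using Int.leInductionDown with
  | base =>
    refine ⟨fun _ => t, ⟨fun i h₁ h₂ => ?_, fun i h₁ h₂ => by omega⟩, rfl⟩
    obtain rfl : i = c := by omega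
    exact ht
  | pred a hac ih =>
    obtain ⟨v, hv, hvc⟩ := ih fun i h₁ h₂ => hu i (by omega) h₂
    have hsucc : a - 1 + 1 = a := by omega
    obtain ⟨α, ⟨hγα, hαβ, hsq⟩, -⟩ :=
      existsUnique_growthSq (hsucc ▸ hu (a - 1) le_rfl (by omega)) (hv.1 a le_rfl hac)
    refine ⟨fun i => if i = a - 1 then α else v i, ⟨fun i h₁ h₂ => ?_, fun i h₁ h₂ => ?_⟩, ?_⟩
    · by_cases hi : i = a - 1
      · subst hi; simpa using hγα
      · simpa [hi] using hv.1 i (by omega) h₂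
    · by_cases hi : i = a - 1
      · subst hi; simpa [hsucc, show a ≠ a - 1 by omega] using ⟨hαβ, hsq⟩
      · simpa [hi, show i + 1 ≠ a - 1 by omega] using hv.2 i (by omega) h₂
    · simpa [show c ≠ a - 1 by omega] using hvc

lemma IsStrip.eq {a c : ℤ} {u u' v v' : ℤ → YoungDiagram} (hv : IsStrip a c u v)
    (hv' : IsStrip a c u' v') (hu : ∀ i, a ≤ i → i < c → OneBox (u i) (u (i + 1)))
    (huu' : ∀ i, a ≤ i → i ≤ c → u i = u' i) (hc : v c = v' c) :
    ∀ i, a ≤ i → i ≤ c → v i = v' i := by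
  intro i hai hic
  induction i, hic using Int.leInductionDown with
  | base => exact hc
  | pred i hic ih =>
    have hsucc : i - 1 + 1 = i := by omega
    have hu₀ := huu' (i - 1) hai (by omega)
    have hu₁ := huu' i (by omega) hic
    have hedge := hu (i - 1) hai (by omega)
    have hedge' := hv'.1 (i - 1) hai (by omega)
    have hsq := hv.2 (i - 1) hai (by omega)
    have hsq' := hv'.2 (i - 1) hai (by omega)
    rw [hsucc] at hedge hsq hsq'
    rw [← hu₀] at hedge'
    rw [← hu₀, ← hu₁, ← ih (by omega)] at hsq'
    exact (existsUnique_growthSq hedge (hv.1 i (by omega) hic)).unique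
      ⟨hv.1 _ hai (by omega), hsq⟩ ⟨hedge', hsq'⟩

/-- A growth diagram on the rectangle `[a, c] × [b, d]`. -/
structure IsGrowthDiagram (a b c d : ℤ) (L : ℤ → ℤ → YoungDiagram) : Prop where
  oneBox_right : ∀ i j, a ≤ i → i < c → b ≤ j → j ≤ d → OneBox (L i j) (L (i + 1) j)
  oneBox_up : ∀ i j, a ≤ i → i ≤ c → b ≤ j → j < d → OneBox (L i j) (L i (j + 1))
  growthSq : ∀ i j, a ≤ i → i < c → b ≤ j → j < d →
    GrowthSq (L i j) (L i (j + 1)) (L (i + 1) j) (L (i + 1) (j + 1))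

def EqOnRect (a b c d : ℤ) (L L' : ℤ → ℤ → YoungDiagram) : Prop :=
  ∀ i j, a ≤ i → i ≤ c → b ≤ j → j ≤ d → L i j = L' i j

namespace IsGrowthDiagram

variable {a b c d : ℤ} {L : ℤ → ℤ → YoungDiagram}

lemma transpose (hL : IsGrowthDiagram a b c d L) : IsGrowthDiagram b a d c fun i j => L j i where
  oneBox_right i j h₁ h₂ h₃ h₄ := hL.oneBox_up j i h₃ h₄ h₁ h₂
  oneBox_up i j h₁ h₂ h₃ h₄ := hL.oneBox_right j i h₃ h₄ h₁ h₂
  growthSq i j h₁ h₂ h₃ h₄ := (hL.growthSq j i h₃ h₄ h₁ h₂).swap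

lemma mono {d' : ℤ} (hL : IsGrowthDiagram a b c d L) (hd : d' ≤ d) :
    IsGrowthDiagram a b c d' L where
  oneBox_right i j h₁ h₂ h₃ h₄ := hL.oneBox_right i j h₁ h₂ h₃ (h₄.trans hd)
  oneBox_up i j h₁ h₂ h₃ h₄ := hL.oneBox_up i j h₁ h₂ h₃ (h₄.trans_le hd)
  growthSq i j h₁ h₂ h₃ h₄ := hL.growthSq i j h₁ h₂ h₃ (h₄.trans_le hd)

lemma congr {L' : ℤ → ℤ → YoungDiagram} (hL : IsGrowthDiagram a b c d L)
    (h : EqOnRect a b c d L L') : IsGrowthDiagram a b c d L' where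
  oneBox_right i j h₁ h₂ h₃ h₄ := by
    rw [← h i j h₁ h₂.le h₃ h₄, ← h (i + 1) j (by omega) h₂ h₃ h₄]
    exact hL.oneBox_right i j h₁ h₂ h₃ h₄
  oneBox_up i j h₁ h₂ h₃ h₄ := by
    rw [← h i j h₁ h₂ h₃ h₄.le, ← h i (j + 1) h₁ h₂ (by omega) h₄]
    exact hL.oneBox_up i j h₁ h₂ h₃ h₄
  growthSq i j h₁ h₂ h₃ h₄ := by
    rw [← h i j h₁ h₂.le h₃ h₄.le, ← h i (j + 1) h₁ h₂.le (by omega) h₄,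
      ← h (i + 1) j (by omega) h₂ h₃ h₄.le, ← h (i + 1) (j + 1) (by omega) h₂ (by omega) h₄]
    exact hL.growthSq i j h₁ h₂ h₃ h₄

lemma isStrip_top (hL : IsGrowthDiagram a b c (d + 1) L) (hbd : b ≤ d) :
    IsStrip a c (fun i => L i d) (fun i => L i (d + 1)) :=
  ⟨fun i h₁ h₂ => hL.oneBox_up i d h₁ h₂ hbd (lt_add_one d),
    fun i h₁ h₂ => ⟨hL.oneBox_right i (d + 1) h₁ h₂ (by omega) le_rfl,
      hL.growthSq i d h₁ h₂ hbd (lt_add_one d)⟩⟩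

lemma exists_extend_up (hL : IsGrowthDiagram a b c d L) (hac : a ≤ c) (hbd : b ≤ d)
    {t : YoungDiagram} (ht : OneBox (L c d) t) :
    ∃ L', IsGrowthDiagram a b c (d + 1) L' ∧ (∀ i j, j ≤ d → L' i j = L i j) ∧
      L' c (d + 1) = t := by
  obtain ⟨v, hv, hvc⟩ := exists_isStrip hac
    (fun i h₁ h₂ => hL.oneBox_right i d h₁ h₂ hbd le_rfl) ht
  refine ⟨fun i j => if j = d + 1 then v i else L i j, ⟨?_, ?_, ?_⟩,
    fun i j hj => if_neg (by omega), by simpa using hvc⟩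
  · intro i j h₁ h₂ h₃ h₄
    rcases (show j ≤ d ∨ j = d + 1 by omega) with hj | rfl
    · simpa [show j ≠ d + 1 by omega] using hL.oneBox_right i j h₁ h₂ h₃ hj
    · simpa using (hv.2 i h₁ h₂).1
  · intro i j h₁ h₂ h₃ h₄
    rcases (show j < d ∨ j = d by omega) with hj | rfl
    · simpa [show j ≠ d + 1 by omega, show j + 1 ≠ d + 1 by omega] using
        hL.oneBox_up i j h₁ h₂ h₃ hj
    · simpa using hv.1 i h₁ h₂
  · intro i j h₁ h₂ h₃ h₄
    rcases (show j < d ∨ j = d by omega) with hj | rfl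
    · simpa [show j ≠ d + 1 by omega, show j + 1 ≠ d + 1 by omega] using
        hL.growthSq i j h₁ h₂ h₃ hj
    · simpa using (hv.2 i h₁ h₂).2

lemma eqOnRect_succ {L' : ℤ → ℤ → YoungDiagram} (hL : IsGrowthDiagram a b c (d + 1) L)
    (hL' : IsGrowthDiagram a b c (d + 1) L') (hbd : b ≤ d) (h : EqOnRect a b c d L L')
    (htop : L c (d + 1) = L' c (d + 1)) : EqOnRect a b c (d + 1) L L' := by
  intro i j h₁ h₂ h₃ h₄
  rcases (show j ≤ d ∨ j = d + 1 by omega) with hj | rfl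
  · exact h i j h₁ h₂ h₃ hj
  · exact (hL.isStrip_top hbd).eq (hL'.isStrip_top hbd)
      (fun i h₁ h₂ => hL.oneBox_right i d h₁ h₂ hbd (by omega))
      (fun i h₁ h₂ => h i d h₁ h₂ hbd le_rfl) htop i h₁ h₂

end IsGrowthDiagram

lemma monotoneOn_of_step {N : ℕ} {q : ℕ → ℤ × ℤ}
    (hstep : ∀ k, k < N →
      q (k + 1) = ((q k).1 + 1, (q k).2) ∨ q (k + 1) = ((q k).1, (q k).2 + 1)) :
    MonotoneOn q (Set.Iic N) := by
  refine monotoneOn_of_le_add_one Set.ordConnected_Iic fun k _ _ hk => ?_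
  rcases hstep k (Set.mem_Iic.mp hk) with h | h <;> simp [h, Prod.le_def]

def LabelsPath (N : ℕ) (q : ℕ → ℤ × ℤ) (ℓ : ℕ → YoungDiagram) (L : ℤ → ℤ → YoungDiagram) :
    Prop :=
  ∀ k, k ≤ N → L (q k).1 (q k).2 = ℓ k

def HasUniqueExtension (a b c d : ℤ) (N : ℕ) (q : ℕ → ℤ × ℤ) (ℓ : ℕ → YoungDiagram) : Prop :=
  ∃ L, IsGrowthDiagram a b c d L ∧ LabelsPath N q ℓ L ∧
    ∀ L', IsGrowthDiagram a b c d L' → LabelsPath N q ℓ L' → EqOnRect a b c d L' L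

namespace HasUniqueExtension

variable {a b c d : ℤ} {N : ℕ} {q : ℕ → ℤ × ℤ} {ℓ : ℕ → YoungDiagram}

lemma zero (hq0 : q 0 = (a, b)) : HasUniqueExtension a b a b 0 q ℓ := by
  refine ⟨fun _ _ => ℓ 0, ⟨fun _ _ h₁ h₂ => absurd h₁ h₂.not_ge,
    fun _ _ _ _ h₃ h₄ => absurd h₃ h₄.not_ge, fun _ _ h₁ h₂ => absurd h₁ h₂.not_ge⟩,
    fun k hk => ?_, fun L' _ hL' i j h₁ h₂ h₃ h₄ => ?_⟩
  · rw [Nat.le_zero.mp hk]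
  · obtain ⟨rfl, rfl⟩ : i = a ∧ j = b := by omega
    simpa [hq0] using hL' 0 le_rfl

lemma of_swap (h : HasUniqueExtension b a d c N (fun k => (q k).swap) ℓ) :
    HasUniqueExtension a b c d N q ℓ := by
  obtain ⟨L, hL, hlab, huniq⟩ := h
  exact ⟨fun i j => L j i, hL.transpose, hlab, fun L' hL' hlab' i j h₁ h₂ h₃ h₄ =>
    huniq (fun i j => L' j i) hL'.transpose hlab' j i h₃ h₄ h₁ h₂⟩

lemma succ_up (h : HasUniqueExtension a b c d N q ℓ) (hq0 : q 0 = (a, b))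
    (hqN : q N = (c, d)) (hmono : ∀ k, k ≤ N → q k ≤ q N) (hq : q (N + 1) = (c, d + 1))
    (hℓ : OneBox (ℓ N) (ℓ (N + 1))) : HasUniqueExtension a b c (d + 1) (N + 1) q ℓ := by
  obtain ⟨L, hL, hlab, huniq⟩ := h
  have hac : a ≤ c ∧ b ≤ d := by simpa [hq0, hqN, Prod.le_def] using hmono 0 (Nat.zero_le N)
  have hLN : L c d = ℓ N := by simpa [hqN] using hlab N le_rfl
  obtain ⟨L', hL', hlow, htop⟩ := hL.exists_extend_up hac.1 hac.2 (hLN ▸ hℓ)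
  have hlab' : LabelsPath (N + 1) q ℓ L' := by
    intro k hk
    rcases Nat.le_succ_iff.mp hk with hk | rfl
    · have hkd : (q k).2 ≤ d := by simpa [hqN] using (Prod.le_def.mp (hmono k (by omega))).2
      rw [hlow _ _ hkd, hlab k (by omega)]
    · simpa [hq] using htop
  refine ⟨L', hL', hlab', fun L'' hL'' hlab'' => hL''.eqOnRect_succ hL' hac.2 ?_ ?_⟩
  · intro i j h₁ h₂ h₃ h₄
    rw [hlow i j h₄]
    exact huniq L'' (hL''.mono (by omega)) (fun k hk => hlab'' k (by omega)) i j h₁ h₂ h₃ h₄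
  · simpa [hq] using (hlab'' (N + 1) le_rfl).trans (hlab' (N + 1) le_rfl).symm

end HasUniqueExtension

theorem hasUniqueExtension {ℓ : ℕ → YoungDiagram} (N : ℕ) :
    ∀ {a b c d : ℤ} {q : ℕ → ℤ × ℤ}, q 0 = (a, b) → q N = (c, d) →
      (∀ k, k < N →
        q (k + 1) = ((q k).1 + 1, (q k).2) ∨ q (k + 1) = ((q k).1, (q k).2 + 1)) →
      (∀ k, k < N → OneBox (ℓ k) (ℓ (k + 1))) → HasUniqueExtension a b c d N q ℓ := by
  induction N with
  | zero =>
    intro a b c d q hq0 hqN _ _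
    obtain ⟨rfl, rfl⟩ := Prod.ext_iff.mp (hqN.symm.trans hq0)
    exact .zero hq0
  | succ N ih =>
    intro a b c d q hq0 hqN hstep hℓ
    have hmono : ∀ k, k ≤ N → q k ≤ q N := fun k hk =>
      monotoneOn_of_step hstep (Set.mem_Iic.mpr (by omega)) (Set.mem_Iic.mpr (by omega)) hk
    have hstep' : ∀ k, k < N → _ := fun k hk => hstep k (by omega)
    have hℓ' : ∀ k, k < N → _ := fun k hk => hℓ k (by omega)
    rcases hstep N (lt_add_one N) with hright | hup
    · obtain ⟨rfl, rfl⟩ := Prod.ext_iff.mp (hqN.symm.trans hright)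
      have ihT := ih (a := b) (b := a) (c := (q N).2) (d := (q N).1) (q := fun k => (q k).swap)
        (by simp [hq0]) rfl (fun k hk => by rcases hstep' k hk with h | h <;> simp [h]) hℓ'
      exact (ihT.succ_up (by simp [hq0]) rfl (fun k hk => Prod.swap_le_swap.mpr (hmono k hk))
        (by simp [hright]) (hℓ N (lt_add_one N))).of_swap
    · obtain ⟨rfl, rfl⟩ := Prod.ext_iff.mp (hqN.symm.trans hup)
      exact (ih hq0 rfl hstep' hℓ').succ_up hq0 rfl hmono hup (hℓ N (lt_add_one N))

theorem growth_diagram_unique_extension_general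
    (a b c d : ℤ)
    (N : ℕ)
    (q : ℕ → ℤ × ℤ) (hq0 : q 0 = (a, b)) (hqN : q N = (c, d))
    (hstep : ∀ k, k < N →
      q (k + 1) = ((q k).1 + 1, (q k).2) ∨ q (k + 1) = ((q k).1, (q k).2 + 1))
    (ℓ : ℕ → YoungDiagram) (hℓ : ∀ k, k < N → OneBox (ℓ k) (ℓ (k + 1))) :
    ∃! L : ℤ → ℤ → YoungDiagram,
      (∀ i j, a ≤ i → i < c → b ≤ j → j ≤ d → OneBox (L i j) (L (i + 1) j)) ∧
      (∀ i j, a ≤ i → i ≤ c → b ≤ j → j < d → OneBox (L i j) (L i (j + 1))) ∧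
      (∀ i j, a ≤ i → i < c → b ≤ j → j < d →
        GrowthSq (L i j) (L i (j + 1)) (L (i + 1) j) (L (i + 1) (j + 1))) ∧
      (∀ k, k ≤ N → L (q k).1 (q k).2 = ℓ k) ∧
      (∀ i j, ¬ (a ≤ i ∧ i ≤ c ∧ b ≤ j ∧ j ≤ d) → L i j = ⊥) := by
  obtain ⟨L, hL, hlab, huniq⟩ := hasUniqueExtension N hq0 hqN hstep hℓ
  let L₀ i j := if a ≤ i ∧ i ≤ c ∧ b ≤ j ∧ j ≤ d then L i j else ⊥
  have hL₀ : EqOnRect a b c d L L₀ := fun i j h₁ h₂ h₃ h₄ => (if_pos ⟨h₁, h₂, h₃, h₄⟩).symm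
  have hlab₀ : LabelsPath N q ℓ L₀ := fun k hk => by
    have hmono := monotoneOn_of_step hstep
    have h₀ := hmono (Set.mem_Iic.mpr (Nat.zero_le N)) (Set.mem_Iic.mpr hk) (Nat.zero_le k)
    have hN := hmono (Set.mem_Iic.mpr hk) (Set.mem_Iic.mpr le_rfl) hk
    simp only [hq0, hqN, Prod.le_def] at h₀ hN
    rw [← hL₀ _ _ (by omega) (by omega) (by omega) (by omega), hlab k hk]
  have hG := hL.congr hL₀
  refine ⟨L₀, ⟨hG.oneBox_right, hG.oneBox_up, hG.growthSq, hlab₀, fun i j h => if_neg h⟩, ?_⟩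
  rintro L' ⟨h₁, h₂, h₃, hlab', hout⟩
  funext i j
  by_cases h : a ≤ i ∧ i ≤ c ∧ b ≤ j ∧ j ≤ d
  · obtain ⟨hi₁, hi₂, hj₁, hj₂⟩ := h
    exact (huniq L' ⟨h₁, h₂, h₃⟩ hlab' i j hi₁ hi₂ hj₁ hj₂).trans (hL₀ i j hi₁ hi₂ hj₁ hj₂)
  · exact (hout i j h).trans (if_neg h).symm

/-- Let `D` be the rectangle in the directed grid graph `ℤ × ℤ` with bottom-left corner
`(a,b)` and top-right corner `(c,d)`.  Given a labeling, by partitions, of the vertices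
along a single monotone lattice path `q` from `(a,b)` to `(c,d)` satisfying the growth
condition (each edge adds a single box), there is a unique extension to a growth diagram
on the whole rectangle (normalized to be `⊥` outside the rectangle). -/
theorem growth_diagram_unique_extension
    (a b c d : ℤ) (hac : a ≤ c) (hbd : b ≤ d)
    (N : ℕ) (hN : (N : ℤ) = (c - a) + (d - b))
    (q : ℕ → ℤ × ℤ) (hq0 : q 0 = (a, b)) (hqN : q N = (c, d))
    (hstep : ∀ k, k < N →
      q (k + 1) = ((q k).1 + 1, (q k).2) ∨ q (k + 1) = ((q k).1, (q k).2 + 1))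
    (ℓ : ℕ → YoungDiagram) (hℓ : ∀ k, k < N → OneBox (ℓ k) (ℓ (k + 1))) :
    ∃! L : ℤ → ℤ → YoungDiagram,
      (∀ i j, a ≤ i → i < c → b ≤ j → j ≤ d → OneBox (L i j) (L (i + 1) j)) ∧
      (∀ i j, a ≤ i → i ≤ c → b ≤ j → j < d → OneBox (L i j) (L i (j + 1))) ∧
      (∀ i j, a ≤ i → i < c → b ≤ j → j < d →
        GrowthSq (L i j) (L i (j + 1)) (L (i + 1) j) (L (i + 1) (j + 1))) ∧
      (∀ k, k ≤ N → L (q k).1 (q k).2 = ℓ k) ∧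
      (∀ i j, ¬ (a ≤ i ∧ i ≤ c ∧ b ≤ j ∧ j ≤ d) → L i j = ⊥) :=
  growth_diagram_unique_extension_general a b c d N q hq0 hqN hstep ℓ hℓ
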